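/- Let Γ be a trivalent labeled graph with at least one black vertex that is a tree with all white vertices of genus 0, all terminal vertices white, and all edge labels equal to 1. Then Γ can be obtained from the b111-tree by a finite sequence of operations O1. -/

import Mathlib

namespace Stratifold

/-- A **labeled graph**: a finite bipartite multigraph whose vertices (named by natural
numbers) are partitioned into black and white vertices, every edge (also named by a
natural number) joining a black vertex to a white vertex and carrying a positive integer
label, and every white vertex carrying an integer genus. -/
structure LGraph where
  blacks : Finset ℕ
  whites : Finset ℕ
  edges : Finset ℕ
  bEnd : ℕ → ℕ
  wEnd : ℕ → ℕ
  label : ℕ → ℕ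
  genus : ℕ → ℤ
  disj : Disjoint blacks whites
  bEnd_mem : ∀ e ∈ edges, bEnd e ∈ blacks
  wEnd_mem : ∀ e ∈ edges, wEnd e ∈ whites
  label_pos : ∀ e ∈ edges, 0 < label e

namespace LGraph

/-- The set of all vertices of a labeled graph. -/
def Verts (G : LGraph) : Finset ℕ := G.blacks ∪ G.whites

/-- The edges incident to a vertex. -/
def IncidentEdges (G : LGraph) (v : ℕ) : Finset ℕ :=
  G.edges.filter fun e => G.bEnd e = v ∨ G.wEnd e = v

/-- The degree of a vertex. -/
def deg (G : LGraph) (v : ℕ) : ℕ := (G.IncidentEdges v).card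

/-- Adjacency: two vertices joined by some edge. -/
def Adj (G : LGraph) (u v : ℕ) : Prop :=
  ∃ e ∈ G.edges, (G.bEnd e = u ∧ G.wEnd e = v) ∨ (G.bEnd e = v ∧ G.wEnd e = u)

/-- Reachability by a path of edges. -/
def Reach (G : LGraph) : ℕ → ℕ → Prop := Relation.ReflTransGen G.Adj

/-- The graph is connected (and nonempty). -/
def Connected (G : LGraph) : Prop :=
  G.Verts.Nonempty ∧ ∀ u ∈ G.Verts, ∀ v ∈ G.Verts, G.Reach u v

/-- A (multi)graph is a tree iff it is connected and has exactly one more vertex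
than it has edges. -/
def IsTree (G : LGraph) : Prop := G.Connected ∧ G.edges.card + 1 = G.Verts.card

/-- Trivalent: for every black vertex, the labels of its incident edges sum to `3`. -/
def Trivalent (G : LGraph) : Prop :=
  ∀ b ∈ G.blacks, ∑ e ∈ G.IncidentEdges b, G.label e = 3

/-- All white vertices have genus `0`. -/
def WhitesGenusZero (G : LGraph) : Prop := ∀ w ∈ G.whites, G.genus w = 0

/-- All terminal (degree-one) vertices are white. -/
def TerminalsWhite (G : LGraph) : Prop := ∀ v ∈ G.blacks, G.deg v ≠ 1

/-- The relator associated to a white vertex `w`: the product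
`b(e₁)^{r(e₁)} ⋯ b(eₚ)^{r(eₚ)}` over the edges `e₁ < ⋯ < eₚ` incident to `w`
(in the chosen linear order of the edge names), where `b(e)` is the black endpoint
of `e` and `r(e)` its label. -/
def relator (G : LGraph) (w : ℕ) : FreeGroup {b : ℕ // b ∈ G.blacks} :=
  (((G.edges.filter fun e => G.wEnd e = w).sort (· ≤ ·)).map fun e =>
    if h : G.bEnd e ∈ G.blacks then
      FreeGroup.of (⟨G.bEnd e, h⟩ : {b : ℕ // b ∈ G.blacks}) ^ G.label e
    else 1).prod

/-- The set of relators of `G`: one for each white vertex. -/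
def rels (G : LGraph) : Set (FreeGroup {b : ℕ // b ∈ G.blacks}) :=
  {r | ∃ w ∈ G.whites, r = G.relator w}

/-- The group associated to a labeled graph which is a tree with all white vertices of
genus 0: one generator for each black vertex, one relation for each white vertex. -/
abbrev Grp (G : LGraph) : Type := PresentedGroup G.rels

/-- The generator of `Grp G` corresponding to a black vertex `b`. -/
def gen (G : LGraph) (b : ℕ) (h : b ∈ G.blacks) : G.Grp := PresentedGroup.of ⟨b, h⟩

/-- `G` is the labeled graph consisting of a single white vertex `w` of genus `0`. -/
def IsSingleWhite (G : LGraph) (w : ℕ) : Prop :=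
  G.whites = {w} ∧ G.blacks = ∅ ∧ G.edges = ∅ ∧ G.genus w = 0

/-- `G` is a `b111`-tree: one black vertex joined by three edges of label `1` to three
white vertices of genus `0`. -/
def IsB111 (G : LGraph) : Prop :=
  ∃ b w₁ w₂ w₃ e₁ e₂ e₃ : ℕ,
    G.blacks = {b} ∧ G.whites = {w₁, w₂, w₃} ∧
    w₁ ≠ w₂ ∧ w₁ ≠ w₃ ∧ w₂ ≠ w₃ ∧
    G.edges = {e₁, e₂, e₃} ∧ e₁ ≠ e₂ ∧ e₁ ≠ e₃ ∧ e₂ ≠ e₃ ∧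
    G.bEnd e₁ = b ∧ G.bEnd e₂ = b ∧ G.bEnd e₃ = b ∧
    G.wEnd e₁ = w₁ ∧ G.wEnd e₂ = w₂ ∧ G.wEnd e₃ = w₃ ∧
    G.label e₁ = 1 ∧ G.label e₂ = 1 ∧ G.label e₃ = 1 ∧
    G.genus w₁ = 0 ∧ G.genus w₂ = 0 ∧ G.genus w₃ = 0

/-- Operation `O1` performed at the white vertex `w` of `G`, producing `G'`:
the edges incident to `w` are split into two (possibly empty) sets `E₀` and its
complement; `w` is replaced by two white vertices `w₀`, `w₁` of genus `0` (the edges of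
`E₀` reattached to `w₀`, the others to `w₁`); a new black vertex `b` and a new terminal
white vertex `w₂` of genus `0` are added, together with three new edges of label `1`
joining `b` to `w₀`, to `w₁` and to `w₂`. -/
def O1At (G G' : LGraph) (w : ℕ) : Prop :=
  w ∈ G.whites ∧
  ∃ (E₀ : Finset ℕ) (w₀ w₁ w₂ b f₀ f₁ f₂ : ℕ),
    E₀ ⊆ G.edges.filter (fun e => G.wEnd e = w) ∧
    w₀ ∉ G.Verts ∧ w₁ ∉ G.Verts ∧ w₂ ∉ G.Verts ∧ b ∉ G.Verts ∧
    w₀ ≠ w₁ ∧ w₀ ≠ w₂ ∧ w₁ ≠ w₂ ∧ b ≠ w₀ ∧ b ≠ w₁ ∧ b ≠ w₂ ∧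
    f₀ ∉ G.edges ∧ f₁ ∉ G.edges ∧ f₂ ∉ G.edges ∧ f₀ ≠ f₁ ∧ f₀ ≠ f₂ ∧ f₁ ≠ f₂ ∧
    G'.blacks = insert b G.blacks ∧
    G'.whites = insert w₀ (insert w₁ (insert w₂ (G.whites.erase w))) ∧
    G'.edges = insert f₀ (insert f₁ (insert f₂ G.edges)) ∧
    (∀ e ∈ G.edges, G'.bEnd e = G.bEnd e ∧ G'.label e = G.label e) ∧
    (∀ e ∈ G.edges, G'.wEnd e =
      if G.wEnd e = w then (if e ∈ E₀ then w₀ else w₁) else G.wEnd e) ∧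
    G'.bEnd f₀ = b ∧ G'.bEnd f₁ = b ∧ G'.bEnd f₂ = b ∧
    G'.wEnd f₀ = w₀ ∧ G'.wEnd f₁ = w₁ ∧ G'.wEnd f₂ = w₂ ∧
    G'.label f₀ = 1 ∧ G'.label f₁ = 1 ∧ G'.label f₂ = 1 ∧
    (∀ v ∈ G.whites.erase w, G'.genus v = G.genus v) ∧
    G'.genus w₀ = 0 ∧ G'.genus w₁ = 0 ∧ G'.genus w₂ = 0

/-- Operation `O1` performed at some white vertex. -/
def O1Step (G G' : LGraph) : Prop := ∃ w, O1At G G' w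

/-- Operation `O2` performed at the white vertex `w` of `G`, producing `G'`: a new black
vertex `b` and a new terminal white vertex `w'` of genus `0` are added, together with an
edge of label `2` joining `w` to `b` and an edge of label `1` joining `b` to `w'`. -/
def O2At (G G' : LGraph) (w : ℕ) : Prop :=
  w ∈ G.whites ∧
  ∃ (b w' f₁ f₂ : ℕ),
    b ∉ G.Verts ∧ w' ∉ G.Verts ∧ b ≠ w' ∧
    f₁ ∉ G.edges ∧ f₂ ∉ G.edges ∧ f₁ ≠ f₂ ∧
    G'.blacks = insert b G.blacks ∧
    G'.whites = insert w' G.whites ∧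
    G'.edges = insert f₁ (insert f₂ G.edges) ∧
    (∀ e ∈ G.edges, G'.bEnd e = G.bEnd e ∧ G'.wEnd e = G.wEnd e ∧ G'.label e = G.label e) ∧
    G'.bEnd f₁ = b ∧ G'.wEnd f₁ = w ∧ G'.label f₁ = 2 ∧
    G'.bEnd f₂ = b ∧ G'.wEnd f₂ = w' ∧ G'.label f₂ = 1 ∧
    (∀ v ∈ G.whites, G'.genus v = G.genus v) ∧
    G'.genus w' = 0

/-- Operation `O2` performed at some white vertex. -/
def O2Step (G G' : LGraph) : Prop := ∃ w, O2At G G' w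

/-- Two labeled graphs are disjoint: no common vertices and no common edges. -/
def DisjGraphs (G₁ G₂ : LGraph) : Prop :=
  Disjoint G₁.Verts G₂.Verts ∧ Disjoint G₁.edges G₂.edges

/-- Operation `O1*` on disjoint labeled graphs `G₁`, `G₂` with chosen white vertices
`w₁ ∈ G₁`, `w₂ ∈ G₂`, producing `G'`: a new black vertex `b` and a new terminal white
vertex `w` of genus `0` are added, together with three new edges of label `1` joining
`b` to `w₁`, to `w₂` and to `w`. -/
def O1StarAt (G₁ G₂ G' : LGraph) (w₁ w₂ : ℕ) : Prop :=
  DisjGraphs G₁ G₂ ∧ w₁ ∈ G₁.whites ∧ w₂ ∈ G₂.whites ∧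
  ∃ (b w f₀ f₁ f₂ : ℕ),
    b ∉ G₁.Verts ∪ G₂.Verts ∧ w ∉ G₁.Verts ∪ G₂.Verts ∧ b ≠ w ∧
    f₀ ∉ G₁.edges ∪ G₂.edges ∧ f₁ ∉ G₁.edges ∪ G₂.edges ∧ f₂ ∉ G₁.edges ∪ G₂.edges ∧
    f₀ ≠ f₁ ∧ f₀ ≠ f₂ ∧ f₁ ≠ f₂ ∧
    G'.blacks = insert b (G₁.blacks ∪ G₂.blacks) ∧
    G'.whites = insert w (G₁.whites ∪ G₂.whites) ∧
    G'.edges = insert f₀ (insert f₁ (insert f₂ (G₁.edges ∪ G₂.edges))) ∧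
    (∀ e ∈ G₁.edges, G'.bEnd e = G₁.bEnd e ∧ G'.wEnd e = G₁.wEnd e ∧ G'.label e = G₁.label e) ∧
    (∀ e ∈ G₂.edges, G'.bEnd e = G₂.bEnd e ∧ G'.wEnd e = G₂.wEnd e ∧ G'.label e = G₂.label e) ∧
    G'.bEnd f₀ = b ∧ G'.wEnd f₀ = w₁ ∧ G'.label f₀ = 1 ∧
    G'.bEnd f₁ = b ∧ G'.wEnd f₁ = w₂ ∧ G'.label f₁ = 1 ∧
    G'.bEnd f₂ = b ∧ G'.wEnd f₂ = w ∧ G'.label f₂ = 1 ∧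
    (∀ v ∈ G₁.whites, G'.genus v = G₁.genus v) ∧
    (∀ v ∈ G₂.whites, G'.genus v = G₂.genus v) ∧
    G'.genus w = 0

end LGraph

open LGraph

/-- `𝒢`: the smallest class of labeled graphs containing the graph consisting of a single
white vertex of genus `0` and closed under operations `O1`, `O2` (at any white vertex of
a member) and `O1*` (joining any two disjoint members at any white vertices). -/
inductive InG : LGraph → Prop
  | single (G : LGraph) (w : ℕ) : IsSingleWhite G w → InG G
  | o1 (G G' : LGraph) (w : ℕ) : InG G → O1At G G' w → InG G'
  | o2 (G G' : LGraph) (w : ℕ) : InG G → O2At G G' w → InG G'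
  | o1star (G₁ G₂ G' : LGraph) (w₁ w₂ : ℕ) :
      InG G₁ → InG G₂ → O1StarAt G₁ G₂ G' w₁ w₂ → InG G'

namespace LGraph

/-- The induced labeled subgraph on a set `S` of vertices. -/
def induce (G : LGraph) (S : Finset ℕ) : LGraph where
  blacks := G.blacks ∩ S
  whites := G.whites ∩ S
  edges := G.edges.filter fun e => G.bEnd e ∈ S ∧ G.wEnd e ∈ S
  bEnd := G.bEnd
  wEnd := G.wEnd
  label := G.label
  genus := G.genus
  disj := G.disj.mono Finset.inter_subset_left Finset.inter_subset_left
  bEnd_mem := fun e he => by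
    rw [Finset.mem_filter] at he
    exact Finset.mem_inter.2 ⟨G.bEnd_mem e he.1, he.2.1⟩
  wEnd_mem := fun e he => by
    rw [Finset.mem_filter] at he
    exact Finset.mem_inter.2 ⟨G.wEnd_mem e he.1, he.2.2⟩
  label_pos := fun e he => G.label_pos e (Finset.mem_filter.1 he).1

/-- `B`: the set of black vertices of degree `3`. -/
def bigB (G : LGraph) : Finset ℕ := G.blacks.filter fun b => G.deg b = 3

/-- `Γ − st(B)`: the graph obtained by removing the black vertices of degree `3`
together with all edges incident to them. -/
def minusStB (G : LGraph) : LGraph := G.induce (G.Verts \ G.bigB)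

/-- `St(B)`: the closed star of the set `B` of black vertices of degree `3`, i.e. the
vertices of `B`, the edges incident to them, and the white endpoints of those edges. -/
def closedStar (G : LGraph) : LGraph where
  blacks := G.bigB
  whites := G.whites.filter fun w => ∃ e ∈ G.edges, G.bEnd e ∈ G.bigB ∧ G.wEnd e = w
  edges := G.edges.filter fun e => G.bEnd e ∈ G.bigB
  bEnd := G.bEnd
  wEnd := G.wEnd
  label := G.label
  genus := G.genus
  disj := G.disj.mono (Finset.filter_subset _ _) (Finset.filter_subset _ _)
  bEnd_mem := fun e he => (Finset.mem_filter.1 he).2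
  wEnd_mem := fun e he => by
    rw [Finset.mem_filter] at he
    exact Finset.mem_filter.2
      ⟨G.wEnd_mem e he.1, ⟨e, he.1, he.2, rfl⟩⟩
  label_pos := fun e he => G.label_pos e (Finset.mem_filter.1 he).1

open Classical in
/-- The connected component of a vertex `v` in `G`, as a labeled graph. -/
noncomputable def component (G : LGraph) (v : ℕ) : LGraph :=
  G.induce (G.Verts.filter fun u => G.Reach u v)

/-- `C` is a `(2,1)`-collapsible tree with root `r`: it is obtained from the labeled
graph consisting of the single white vertex `r` of genus `0` by repeatedly attaching,
at a white vertex `u`, a new black vertex `b` joined to `u` by an edge of label `2` and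
to a new terminal white vertex by an edge of label `1` (i.e. by repeatedly performing
operation `O2`).  This is exactly the barycentric subdivision of a tree rooted at `r`,
with barycenters colored black, an edge labeled `2` precisely when its distance to the
root is even, and `1` when it is odd. -/
def IsCollapsible (C : LGraph) (r : ℕ) : Prop :=
  ∃ C₀ : LGraph, IsSingleWhite C₀ r ∧ Relation.ReflTransGen O2Step C₀ C

open Classical in
/-- The white vertices of `St(B)` that are not the root of the `(2,1)`-collapsible
component of `Γ − st(B)` containing them. -/
noncomputable def notRootWhites (G : LGraph) : Finset ℕ :=
  G.closedStar.whites.filter fun w => ¬ IsCollapsible ((G.minusStB).component w) w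

/-- `R` is the reduced graph `R(G)`: it is obtained from the closed star `St(B)` by
attaching to each white vertex `w` of `St(B)` that is not a root a `b12`-tree, i.e. a
new black vertex joined to `w` by an edge of label `1` and to a new terminal white
vertex of genus `0` by an edge of label `2`. -/
def IsReduced (G R : LGraph) : Prop :=
  ∃ nb nw ne₁ ne₂ : ℕ → ℕ,
    (∀ w ∈ G.notRootWhites,
      nb w ∉ G.Verts ∧ nw w ∉ G.Verts ∧ nb w ≠ nw w ∧
      ne₁ w ∉ G.edges ∧ ne₂ w ∉ G.edges ∧ ne₁ w ≠ ne₂ w) ∧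
    (∀ w ∈ G.notRootWhites, ∀ w' ∈ G.notRootWhites, w ≠ w' →
      nb w ≠ nb w' ∧ nb w ≠ nw w' ∧ nw w ≠ nw w' ∧
      ne₁ w ≠ ne₁ w' ∧ ne₁ w ≠ ne₂ w' ∧ ne₂ w ≠ ne₂ w') ∧
    R.blacks = G.closedStar.blacks ∪ G.notRootWhites.image nb ∧
    R.whites = G.closedStar.whites ∪ G.notRootWhites.image nw ∧
    R.edges = G.closedStar.edges ∪ G.notRootWhites.image ne₁ ∪ G.notRootWhites.image ne₂ ∧
    (∀ e ∈ G.closedStar.edges, R.bEnd e = G.bEnd e ∧ R.wEnd e = G.wEnd e ∧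
      R.label e = G.label e) ∧
    (∀ w ∈ G.closedStar.whites, R.genus w = G.genus w) ∧
    (∀ w ∈ G.notRootWhites,
      R.bEnd (ne₁ w) = nb w ∧ R.wEnd (ne₁ w) = w ∧ R.label (ne₁ w) = 1 ∧
      R.bEnd (ne₂ w) = nb w ∧ R.wEnd (ne₂ w) = nw w ∧ R.label (ne₂ w) = 2 ∧
      R.genus (nw w) = 0)

/-- `H` is a horned tree: the bicolored labeled tree obtained from a tree `T` with at
least two edges, all of whose nonterminal vertices have degree `3`, by coloring
degree-1 vertices white (genus `0`) and degree-3 vertices black, trisecting terminal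
edges and bisecting nonterminal edges (coloring the new vertices black exactly when
they neighbor a terminal vertex), and labeling terminal edges `2` and all other edges
`1`.  Equivalently (intrinsically): `H` is a tree with all whites of genus `0`; at
least one black vertex has degree `3`; every terminal vertex is white and its edge has
label `2`; every nonterminal white vertex has degree `2` with both incident labels `1`;
and every black vertex either has degree `3` with all incident labels `1`, or has
degree `2` with one incident edge of label `2` leading to a terminal white vertex and
the other of label `1`. -/
def IsHornedTree (H : LGraph) : Prop :=
  H.IsTree ∧ H.WhitesGenusZero ∧
  (∃ b ∈ H.blacks, H.deg b = 3) ∧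
  H.TerminalsWhite ∧
  (∀ w ∈ H.whites, H.deg w = 1 → ∀ e ∈ H.IncidentEdges w, H.label e = 2) ∧
  (∀ w ∈ H.whites, H.deg w ≠ 1 → H.deg w = 2 ∧ ∀ e ∈ H.IncidentEdges w, H.label e = 1) ∧
  (∀ b ∈ H.blacks,
    (H.deg b = 3 ∧ ∀ e ∈ H.IncidentEdges b, H.label e = 1) ∨
    (H.deg b = 2 ∧ ∃ e₁ ∈ H.IncidentEdges b, ∃ e₂ ∈ H.IncidentEdges b, e₁ ≠ e₂ ∧
      H.label e₁ = 2 ∧ H.label e₂ = 1 ∧ H.deg (H.wEnd e₁) = 1))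

/-- `H` is a (labeled bipartite) subgraph of `G`. -/
def IsSubgraph (H G : LGraph) : Prop :=
  H.blacks ⊆ G.blacks ∧ H.whites ⊆ G.whites ∧ H.edges ⊆ G.edges ∧
  (∀ e ∈ H.edges, H.bEnd e = G.bEnd e ∧ H.wEnd e = G.wEnd e ∧ H.label e = G.label e) ∧
  ∀ w ∈ H.whites, H.genus w = G.genus w

end LGraph

end Stratifold

/-!
Since every edge has label `1`, every black vertex of `Γ` has exactly three edges, and
counting vertices of the tree gives `#whites = 2 #blacks + 1` against a total white degree
of `3 #blacks`; hence some white vertex `w₂` is terminal. Its black neighbour `b` is joined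
to two further white vertices `w₀ ≠ w₁` (a tree has no multiple edges). Deleting `b`, `w₂`
and the three edges at `b`, and merging `w₀`, `w₁` into one new white vertex `w`, yields a
graph of the same kind with one black vertex fewer, from which `Γ` is recovered by `O1` at
`w`. Induction on the number of black vertices ends at a single black vertex, i.e. at the
`b111`-tree.
-/

namespace Stratifold.LGraph

variable {G : LGraph}

lemma mem_incidentEdges {v e : ℕ} :
    e ∈ G.IncidentEdges v ↔ e ∈ G.edges ∧ (G.bEnd e = v ∨ G.wEnd e = v) :=
  Finset.mem_filter

lemma bEnd_ne_of_mem_whites {e v : ℕ} (he : e ∈ G.edges) (hv : v ∈ G.whites) :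
    G.bEnd e ≠ v :=
  fun h => Finset.disjoint_left.1 G.disj (h ▸ G.bEnd_mem e he) hv

lemma wEnd_ne_of_mem_blacks {e v : ℕ} (he : e ∈ G.edges) (hv : v ∈ G.blacks) :
    G.wEnd e ≠ v :=
  fun h => Finset.disjoint_left.1 G.disj hv (h ▸ G.wEnd_mem e he)

lemma ne_of_mem_blacks_of_mem_whites {b w : ℕ} (hb : b ∈ G.blacks) (hw : w ∈ G.whites) :
    b ≠ w :=
  fun h => Finset.disjoint_left.1 G.disj hb (h ▸ hw)

lemma incidentEdges_of_mem_blacks {b : ℕ} (hb : b ∈ G.blacks) :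
    G.IncidentEdges b = G.edges.filter fun e => G.bEnd e = b :=
  Finset.filter_congr fun _ he => or_iff_left (wEnd_ne_of_mem_blacks he hb)

lemma incidentEdges_of_mem_whites {w : ℕ} (hw : w ∈ G.whites) :
    G.IncidentEdges w = G.edges.filter fun e => G.wEnd e = w :=
  Finset.filter_congr fun _ he => or_iff_right (bEnd_ne_of_mem_whites he hw)

lemma bEnd_eq_of_mem_incidentEdges {b e : ℕ} (hb : b ∈ G.blacks)
    (he : e ∈ G.IncidentEdges b) : G.bEnd e = b :=
  (mem_incidentEdges.1 he).2.resolve_right (wEnd_ne_of_mem_blacks (mem_incidentEdges.1 he).1 hb)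

lemma Adj.symm {u v : ℕ} (h : G.Adj u v) : G.Adj v u := by
  obtain ⟨e, he, h⟩ := h
  exact ⟨e, he, h.symm⟩

lemma Adj.mem_verts {u v : ℕ} (h : G.Adj u v) : u ∈ G.Verts := by
  obtain ⟨e, he, ⟨rfl, -⟩ | ⟨-, rfl⟩⟩ := h
  · exact Finset.mem_union_left _ (G.bEnd_mem e he)
  · exact Finset.mem_union_right _ (G.wEnd_mem e he)

lemma Reach.symm {u v : ℕ} (h : G.Reach u v) : G.Reach v u := by
  induction h with
  | refl => exact .refl
  | tail _ hadj ih => exact .head hadj.symm ih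

lemma Connected.exists_wEnd_eq (hG : G.Connected) (hb : G.blacks.Nonempty) {w : ℕ}
    (hw : w ∈ G.whites) : ∃ e ∈ G.edges, G.wEnd e = w := by
  obtain ⟨b, hb⟩ := hb
  obtain h | ⟨_, ⟨e, he, ⟨hbe, -⟩ | ⟨-, hwe⟩⟩, -⟩ :=
    (hG.2 w (Finset.mem_union_right _ hw) b (Finset.mem_union_left _ hb)).cases_head
  · exact absurd h (ne_of_mem_blacks_of_mem_whites hb hw).symm
  · exact absurd hbe (bEnd_ne_of_mem_whites he hw)
  · exact ⟨e, he, hwe⟩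

lemma Connected.of_surjOn {H : LGraph} (hG : G.Connected) {φ : ℕ → ℕ}
    (hmaps : Set.MapsTo φ G.Verts H.Verts) (hsurj : Set.SurjOn φ G.Verts H.Verts)
    (hedge : ∀ e ∈ G.edges, H.Reach (φ (G.bEnd e)) (φ (G.wEnd e))) : H.Connected := by
  have hadj : ∀ x y, G.Adj x y → H.Reach (φ x) (φ y) := by
    rintro x y ⟨e, he, ⟨rfl, rfl⟩ | ⟨rfl, rfl⟩⟩
    · exact hedge e he
    · exact (hedge e he).symm
  obtain ⟨⟨r, hr⟩, hconn⟩ := hG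
  refine ⟨⟨φ r, hmaps hr⟩, fun u hu v hv => ?_⟩
  obtain ⟨x, hx, rfl⟩ := hsurj hu
  obtain ⟨y, hy, rfl⟩ := hsurj hv
  exact Relation.ReflTransGen.lift' φ hadj _ _ (hconn x hx y hy)

/-- Multiple edges of `G` become a single edge. -/
def toSimpleGraph (G : LGraph) : SimpleGraph G.Verts where
  Adj u v := G.Adj u v
  symm := ⟨fun _ _ => Adj.symm⟩
  loopless := ⟨fun u => by
    rintro ⟨e, he, ⟨hb, hw⟩ | ⟨hb, hw⟩⟩ <;>
      exact bEnd_ne_of_mem_whites he (G.wEnd_mem e he) (hb.trans hw.symm)⟩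

@[simp]
lemma toSimpleGraph_adj {u v : G.Verts} : G.toSimpleGraph.Adj u v ↔ G.Adj u v := Iff.rfl

lemma Connected.toSimpleGraph (hG : G.Connected) : G.toSimpleGraph.Connected := by
  have reach : ∀ u v, G.Reach u v → ∀ (hu : u ∈ G.Verts) (hv : v ∈ G.Verts),
      G.toSimpleGraph.Reachable ⟨u, hu⟩ ⟨v, hv⟩ := by
    intro u v h
    induction h with
    | refl => exact fun _ _ => .rfl
    | tail _ hadj ih =>
      exact fun hu _ => (ih hu hadj.mem_verts).trans (toSimpleGraph_adj.2 hadj).reachable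
  obtain ⟨⟨r, hr⟩, hconn⟩ := hG
  have : Nonempty G.Verts := ⟨⟨r, hr⟩⟩
  exact .mk fun u v => reach u v (hconn u u.2 v v.2) u.2 v.2

/-- The underlying simple graph is connected and has at most `#S` edges. -/
lemma Connected.card_verts_le {S : Finset ℕ} (hG : G.Connected) (hS : S ⊆ G.edges)
    (hcover : ∀ e ∈ G.edges, ∃ e' ∈ S, G.bEnd e' = G.bEnd e ∧ G.wEnd e' = G.wEnd e) :
    G.Verts.card ≤ S.card + 1 := by
  let ends : S → G.toSimpleGraph.edgeSet := fun e =>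
    ⟨s(⟨G.bEnd e, Finset.mem_union_left _ (G.bEnd_mem e (hS e.2))⟩,
       ⟨G.wEnd e, Finset.mem_union_right _ (G.wEnd_mem e (hS e.2))⟩),
     toSimpleGraph_adj.2 ⟨e, hS e.2, .inl ⟨rfl, rfl⟩⟩⟩
  have hends : Function.Surjective ends := by
    rintro ⟨z, hz⟩
    induction z using Sym2.ind with
    | _ u v =>
      obtain ⟨e, he, h | h⟩ := toSimpleGraph_adj.1 hz <;>
        obtain ⟨e', he', hb, hw⟩ := hcover e he
      · exact ⟨⟨e', he'⟩, by ext1; simp [ends, hb, hw, h.1, h.2]⟩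
      · exact ⟨⟨e', he'⟩, by ext1; simp [ends, hb, hw, h.1, h.2, Sym2.eq_swap]⟩
  calc G.Verts.card = Nat.card G.Verts := (Nat.card_eq_finsetCard _).symm
    _ ≤ Nat.card G.toSimpleGraph.edgeSet + 1 :=
      hG.toSimpleGraph.card_vert_le_card_edgeSet_add_one
    _ ≤ Nat.card S + 1 := by gcongr; exact Nat.card_le_card_of_surjective ends hends
    _ = S.card + 1 := by rw [Nat.card_eq_finsetCard]

lemma IsTree.eq_of_bEnd_eq_of_wEnd_eq (hG : G.IsTree) {e e' : ℕ} (he : e ∈ G.edges)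
    (he' : e' ∈ G.edges) (hb : G.bEnd e = G.bEnd e') (hw : G.wEnd e = G.wEnd e') :
    e = e' := by
  by_contra hne
  have hle := hG.1.card_verts_le (S := G.edges.erase e') (Finset.erase_subset _ _)
    fun f hf => if hf' : f = e' then ⟨e, Finset.mem_erase.2 ⟨hne, he⟩, hf' ▸ ⟨hb, hw⟩⟩
      else ⟨f, Finset.mem_erase.2 ⟨hf', hf⟩, rfl, rfl⟩
  have := Finset.card_erase_add_one he'
  have := hG.2
  omega

section labelOne

variable (hTri : G.Trivalent) (hlabel : ∀ e ∈ G.edges, G.label e = 1)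
include hTri hlabel

lemma Trivalent.deg_eq_three {b : ℕ} (hb : b ∈ G.blacks) : G.deg b = 3 := by
  have h := hTri b hb
  rwa [Finset.sum_congr rfl fun e he => hlabel e (mem_incidentEdges.1 he).1,
    Finset.sum_const, smul_eq_mul, mul_one] at h

lemma Trivalent.card_edges : G.edges.card = 3 * G.blacks.card := by
  calc G.edges.card = ∑ b ∈ G.blacks, (G.edges.filter fun e => G.bEnd e = b).card :=
        Finset.card_eq_sum_card_fiberwise G.bEnd_mem
    _ = ∑ _b ∈ G.blacks, 3 := Finset.sum_congr rfl fun b hb =>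
        incidentEdges_of_mem_blacks hb ▸ hTri.deg_eq_three hlabel hb
    _ = 3 * G.blacks.card := by rw [Finset.sum_const, smul_eq_mul, mul_comm]

end labelOne

structure IsTrivalentTree (G : LGraph) : Prop where
  blacks_nonempty : G.blacks.Nonempty
  trivalent : G.Trivalent
  isTree : G.IsTree
  label_eq_one : ∀ e ∈ G.edges, G.label e = 1

lemma IsTrivalentTree.exists_deg_eq_one (hG : G.IsTrivalentTree) :
    ∃ w ∈ G.whites, G.deg w = 1 := by
  have hV : G.Verts.card = G.blacks.card + G.whites.card :=
    Finset.card_union_of_disjoint G.disj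
  have hsum : ∑ w ∈ G.whites, G.deg w = G.edges.card := by
    rw [Finset.card_eq_sum_card_fiberwise G.wEnd_mem]
    exact Finset.sum_congr rfl fun w hw => by rw [deg, incidentEdges_of_mem_whites hw]
  by_contra! hno
  have hdeg : ∀ w ∈ G.whites, 2 ≤ G.deg w := fun w hw => by
    obtain ⟨e, he, hwe⟩ := hG.isTree.1.exists_wEnd_eq hG.blacks_nonempty hw
    have : 0 < G.deg w := Finset.card_pos.2 ⟨e, mem_incidentEdges.2 ⟨he, .inr hwe⟩⟩
    have := hno w hw
    omega
  have := Finset.card_nsmul_le_sum G.whites G.deg 2 hdeg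
  have := hG.isTree.2
  have := hG.trivalent.card_edges hG.label_eq_one
  have := Finset.card_pos.2 hG.blacks_nonempty
  rw [smul_eq_mul, hsum] at *
  omega

/-- The configuration created by operation `O1`, with `b` the new black vertex and `w₂` the
new terminal white vertex. -/
structure IsTerminalClaw (G : LGraph) (b w₀ w₁ w₂ f₀ f₁ f₂ : ℕ) : Prop where
  mem_blacks : b ∈ G.blacks
  incidentEdges_eq : G.IncidentEdges b = {f₀, f₁, f₂}
  incidentEdges_terminal : G.IncidentEdges w₂ = {f₂}
  f₀_ne_f₁ : f₀ ≠ f₁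
  f₀_ne_f₂ : f₀ ≠ f₂
  f₁_ne_f₂ : f₁ ≠ f₂
  wEnd_f₀ : G.wEnd f₀ = w₀
  wEnd_f₁ : G.wEnd f₁ = w₁
  wEnd_f₂ : G.wEnd f₂ = w₂
  w₀_ne_w₁ : w₀ ≠ w₁

namespace IsTerminalClaw

variable {b w₀ w₁ w₂ f₀ f₁ f₂ : ℕ} (h : G.IsTerminalClaw b w₀ w₁ w₂ f₀ f₁ f₂)
include h

lemma mem_edges {f : ℕ} (hf : f ∈ ({f₀, f₁, f₂} : Finset ℕ)) : f ∈ G.edges :=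
  (mem_incidentEdges.1 (h.incidentEdges_eq ▸ hf)).1

lemma bEnd_eq {f : ℕ} (hf : f ∈ ({f₀, f₁, f₂} : Finset ℕ)) : G.bEnd f = b :=
  bEnd_eq_of_mem_incidentEdges h.mem_blacks (h.incidentEdges_eq ▸ hf)

lemma w₀_mem : w₀ ∈ G.whites := h.wEnd_f₀ ▸ G.wEnd_mem _ (h.mem_edges (by simp))
lemma w₁_mem : w₁ ∈ G.whites := h.wEnd_f₁ ▸ G.wEnd_mem _ (h.mem_edges (by simp))
lemma w₂_mem : w₂ ∈ G.whites := h.wEnd_f₂ ▸ G.wEnd_mem _ (h.mem_edges (by simp))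

lemma eq_f₂_of_wEnd_eq {e : ℕ} (he : e ∈ G.edges) (hw : G.wEnd e = w₂) : e = f₂ :=
  Finset.mem_singleton.1 (h.incidentEdges_terminal ▸ mem_incidentEdges.2 ⟨he, .inr hw⟩)

lemma w₀_ne_w₂ : w₀ ≠ w₂ := fun hw =>
  h.f₀_ne_f₂ (h.eq_f₂_of_wEnd_eq (h.mem_edges (by simp)) (h.wEnd_f₀.trans hw))

lemma w₁_ne_w₂ : w₁ ≠ w₂ := fun hw =>
  h.f₁_ne_f₂ (h.eq_f₂_of_wEnd_eq (h.mem_edges (by simp)) (h.wEnd_f₁.trans hw))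

lemma insert_subset_verts : ({b, w₀, w₁, w₂} : Finset ℕ) ⊆ G.Verts := by
  simp only [Finset.insert_subset_iff, Finset.singleton_subset_iff, Verts, Finset.mem_union]
  exact ⟨.inl h.mem_blacks, .inr h.w₀_mem, .inr h.w₁_mem, .inr h.w₂_mem⟩

lemma card_insert_edges : ({f₀, f₁, f₂} : Finset ℕ).card = 3 :=
  Finset.card_eq_three.2 ⟨f₀, f₁, f₂, h.f₀_ne_f₁, h.f₀_ne_f₂, h.f₁_ne_f₂, rfl⟩

lemma card_insert_verts : ({b, w₀, w₁, w₂} : Finset ℕ).card = 4 := by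
  have hne {v} (hv : v ∈ G.whites) := ne_of_mem_blacks_of_mem_whites h.mem_blacks hv
  rw [Finset.card_insert_of_notMem (by simp [hne h.w₀_mem, hne h.w₁_mem, hne h.w₂_mem]),
    Finset.card_eq_three.2 ⟨w₀, w₁, w₂, h.w₀_ne_w₁, h.w₀_ne_w₂, h.w₁_ne_w₂, rfl⟩]

end IsTerminalClaw

lemma IsTrivalentTree.exists_isTerminalClaw (hG : G.IsTrivalentTree) :
    ∃ b w₀ w₁ w₂ f₀ f₁ f₂, G.IsTerminalClaw b w₀ w₁ w₂ f₀ f₁ f₂ := by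
  obtain ⟨w₂, hw₂, hdeg⟩ := hG.exists_deg_eq_one
  obtain ⟨f₂, hI₂⟩ := Finset.card_eq_one.1 hdeg
  have hf₂ : f₂ ∈ G.IncidentEdges w₂ := hI₂ ▸ Finset.mem_singleton_self f₂
  have hf₂e : f₂ ∈ G.edges := (mem_incidentEdges.1 hf₂).1
  set b := G.bEnd f₂
  have hb : b ∈ G.blacks := G.bEnd_mem f₂ hf₂e
  have hf₂b : f₂ ∈ G.IncidentEdges b := mem_incidentEdges.2 ⟨hf₂e, .inl rfl⟩
  obtain ⟨f₀, f₁, hf₀₁, hpair⟩ : ∃ f₀ f₁, f₀ ≠ f₁ ∧ (G.IncidentEdges b).erase f₂ = {f₀, f₁} := by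
    apply Finset.card_eq_two.1
    rw [Finset.card_erase_of_mem hf₂b, ← deg, hG.trivalent.deg_eq_three hG.label_eq_one hb]
  have hf₀ : f₀ ∈ (G.IncidentEdges b).erase f₂ := hpair ▸ by simp
  have hf₁ : f₁ ∈ (G.IncidentEdges b).erase f₂ := hpair ▸ by simp
  have hf₀I := Finset.mem_of_mem_erase hf₀
  have hf₁I := Finset.mem_of_mem_erase hf₁
  refine ⟨b, G.wEnd f₀, G.wEnd f₁, w₂, f₀, f₁, f₂,
    ⟨hb, ?_, hI₂, hf₀₁, Finset.ne_of_mem_erase hf₀, Finset.ne_of_mem_erase hf₁, rfl, rfl,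
      (mem_incidentEdges.1 hf₂).2.resolve_left (bEnd_ne_of_mem_whites hf₂e hw₂),
      fun hw => hf₀₁ ?_⟩⟩
  · rw [← Finset.insert_erase hf₂b, hpair, Finset.insert_comm, Finset.pair_comm f₂]
  · exact hG.isTree.eq_of_bEnd_eq_of_wEnd_eq (mem_incidentEdges.1 hf₀I).1
      (mem_incidentEdges.1 hf₁I).1
      ((bEnd_eq_of_mem_incidentEdges hb hf₀I).trans (bEnd_eq_of_mem_incidentEdges hb hf₁I).symm)
      hw

/-- The inverse of `O1` at a terminal claw centred at `b`. Excluding the edges at `w₂` is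
redundant for a claw, but makes the construction well defined for every `G`. -/
def contractClaw (G : LGraph) (b w₀ w₁ w₂ w : ℕ) (hw : w ∉ G.Verts) : LGraph where
  blacks := G.blacks.erase b
  whites := insert w (G.whites \ {w₀, w₁, w₂})
  edges := G.edges.filter fun e => G.bEnd e ≠ b ∧ G.wEnd e ≠ w₂
  bEnd := G.bEnd
  wEnd e := if G.wEnd e = w₀ ∨ G.wEnd e = w₁ then w else G.wEnd e
  label := G.label
  genus := Function.update G.genus w 0
  disj := by
    refine Finset.disjoint_insert_right.2 ⟨fun hb => hw ?_, ?_⟩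
    · exact Finset.mem_union_left _ (Finset.mem_of_mem_erase hb)
    · exact G.disj.mono (Finset.erase_subset _ _) Finset.sdiff_subset
  bEnd_mem e he := by
    obtain ⟨he, hb, -⟩ := Finset.mem_filter.1 he
    exact Finset.mem_erase.2 ⟨hb, G.bEnd_mem e he⟩
  wEnd_mem e he := by
    obtain ⟨he, -, hw₂⟩ := Finset.mem_filter.1 he
    split_ifs with h
    · exact Finset.mem_insert_self _ _
    · simp only [not_or] at h
      simp [G.wEnd_mem e he, h.1, h.2, hw₂]
  label_pos e he := G.label_pos e (Finset.mem_filter.1 he).1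

lemma WhitesGenusZero.contractClaw {b w₀ w₁ w₂ w : ℕ} {hw : w ∉ G.Verts}
    (hgenus : G.WhitesGenusZero) : (G.contractClaw b w₀ w₁ w₂ w hw).WhitesGenusZero := by
  intro v hv
  show Function.update G.genus w 0 v = 0
  by_cases hvw : v = w
  · rw [hvw, Function.update_self]
  · rw [Function.update_of_ne hvw]
    exact hgenus v (Finset.mem_sdiff.1 (Finset.mem_of_mem_insert_of_ne hv hvw)).1

section contractClaw

variable {b w₀ w₁ w₂ f₀ f₁ f₂ w : ℕ} (h : G.IsTerminalClaw b w₀ w₁ w₂ f₀ f₁ f₂)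
  (hw : w ∉ G.Verts)
include h

lemma edges_contractClaw :
    (G.contractClaw b w₀ w₁ w₂ w hw).edges = G.edges \ {f₀, f₁, f₂} := by
  ext e
  simp only [contractClaw, Finset.mem_filter, Finset.mem_sdiff]
  refine and_congr_right fun he => ⟨fun ⟨hb, _⟩ hf => hb (h.bEnd_eq hf), fun hf => ⟨?_, ?_⟩⟩
  · exact fun hb => hf (h.incidentEdges_eq ▸ mem_incidentEdges.2 ⟨he, .inl hb⟩)
  · exact fun hw₂ => hf (by simp [h.eq_f₂_of_wEnd_eq he hw₂])

lemma verts_contractClaw :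
    (G.contractClaw b w₀ w₁ w₂ w hw).Verts = insert w (G.Verts \ {b, w₀, w₁, w₂}) := by
  have := h.mem_blacks
  have := h.w₀_mem
  have := h.w₁_mem
  have := h.w₂_mem
  ext v
  simp only [Verts, contractClaw, Finset.mem_union, Finset.mem_erase, Finset.mem_insert,
    Finset.mem_sdiff, Finset.mem_singleton]
  grind [ne_of_mem_blacks_of_mem_whites]

lemma incidentEdges_contractClaw {b' : ℕ}
    (hb' : b' ∈ (G.contractClaw b w₀ w₁ w₂ w hw).blacks) :
    (G.contractClaw b w₀ w₁ w₂ w hw).IncidentEdges b' = G.IncidentEdges b' := by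
  obtain ⟨hne, hb'G⟩ := Finset.mem_erase.1 hb'
  rw [incidentEdges_of_mem_blacks hb', incidentEdges_of_mem_blacks hb'G, edges_contractClaw h]
  ext e
  simp only [Finset.mem_filter, Finset.mem_sdiff]
  exact ⟨fun ⟨⟨he, _⟩, hbe⟩ => ⟨he, hbe⟩,
    fun ⟨he, hbe⟩ => ⟨⟨he, fun hf => hne (hbe ▸ h.bEnd_eq hf)⟩, hbe⟩⟩

/-- Collapsing `b, w₀, w₁, w₂` to `w` maps `G` onto its contraction, edge by edge. -/
lemma connected_contractClaw (hG : G.Connected) :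
    (G.contractClaw b w₀ w₁ w₂ w hw).Connected := by
  have hV := verts_contractClaw h hw
  refine hG.of_surjOn (φ := fun v => if v ∈ ({b, w₀, w₁, w₂} : Finset ℕ) then w else v)
    ?_ ?_ fun e he => ?_
  · intro v hv
    simp only [Finset.mem_coe, hV] at hv ⊢
    split_ifs with hv'
    · exact Finset.mem_insert_self _ _
    · exact Finset.mem_insert_of_mem (Finset.mem_sdiff.2 ⟨hv, hv'⟩)
  · intro u hu
    rw [Finset.mem_coe, hV, Finset.mem_insert, Finset.mem_sdiff] at hu
    rcases hu with rfl | ⟨hu, hu'⟩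
    · exact ⟨w₀, Finset.mem_union_right _ h.w₀_mem, by simp⟩
    · exact ⟨u, hu, if_neg hu'⟩
  by_cases hf : e ∈ ({f₀, f₁, f₂} : Finset ℕ)
  · have hbe : G.bEnd e ∈ ({b, w₀, w₁, w₂} : Finset ℕ) := by simp [h.bEnd_eq hf]
    have hwe : G.wEnd e ∈ ({b, w₀, w₁, w₂} : Finset ℕ) := by
      simp only [Finset.mem_insert, Finset.mem_singleton] at hf
      rcases hf with rfl | rfl | rfl <;> simp [h.wEnd_f₀, h.wEnd_f₁, h.wEnd_f₂]
    simp only [hbe, hwe, if_true]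
    exact .refl
  · have he' : e ∈ (G.contractClaw b w₀ w₁ w₂ w hw).edges :=
      edges_contractClaw h hw ▸ Finset.mem_sdiff.2 ⟨he, hf⟩
    have hbe : G.bEnd e ∉ ({b, w₀, w₁, w₂} : Finset ℕ) := by
      have hne {v} (hv : v ∈ G.whites) := ne_of_mem_blacks_of_mem_whites (G.bEnd_mem e he) hv
      have hbe : G.bEnd e ≠ b := fun hbe =>
        hf (h.incidentEdges_eq ▸ mem_incidentEdges.2 ⟨he, .inl hbe⟩)
      simp [hbe, hne h.w₀_mem, hne h.w₁_mem, hne h.w₂_mem]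
    have hwb : G.wEnd e ≠ b :=
      (ne_of_mem_blacks_of_mem_whites h.mem_blacks (G.wEnd_mem e he)).symm
    have hw₂ : G.wEnd e ≠ w₂ := fun hwe => hf (by simp [h.eq_f₂_of_wEnd_eq he hwe])
    refine .single ⟨e, he', .inl ⟨(if_neg hbe).symm, ?_⟩⟩
    show (if G.wEnd e = w₀ ∨ G.wEnd e = w₁ then w else G.wEnd e) =
      if G.wEnd e ∈ ({b, w₀, w₁, w₂} : Finset ℕ) then w else G.wEnd e
    simp [hwb, hw₂]

lemma isTree_contractClaw (hG : G.IsTree) : (G.contractClaw b w₀ w₁ w₂ w hw).IsTree := by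
  refine ⟨connected_contractClaw h hw hG.1, ?_⟩
  have hfsub : ({f₀, f₁, f₂} : Finset ℕ) ⊆ G.edges := fun f hf => h.mem_edges hf
  rw [edges_contractClaw h, verts_contractClaw h, Finset.card_insert_of_notMem
      fun hw' => hw (Finset.mem_sdiff.1 hw').1,
    Finset.card_sdiff_of_subset hfsub, Finset.card_sdiff_of_subset h.insert_subset_verts,
    h.card_insert_edges, h.card_insert_verts]
  have := hG.2
  have := Finset.card_le_card hfsub
  omega

lemma IsTrivalentTree.contractClaw (hG : G.IsTrivalentTree) (hcard : 1 < G.blacks.card) :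
    (G.contractClaw b w₀ w₁ w₂ w hw).IsTrivalentTree where
  blacks_nonempty := by
    rw [← Finset.card_pos]
    exact (Finset.card_erase_of_mem h.mem_blacks).trans_gt (by omega)
  trivalent b' hb' := by
    rw [incidentEdges_contractClaw h hw hb']
    exact hG.trivalent b' (Finset.mem_of_mem_erase hb')
  isTree := isTree_contractClaw h hw hG.isTree
  label_eq_one e he := hG.label_eq_one e (Finset.mem_filter.1 he).1

lemma notMem_verts_contractClaw {v : ℕ} (hv : v ∈ ({b, w₀, w₁, w₂} : Finset ℕ)) :
    v ∉ (G.contractClaw b w₀ w₁ w₂ w hw).Verts := by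
  rw [verts_contractClaw h hw, Finset.mem_insert, Finset.mem_sdiff, not_or, not_and_not_right]
  exact ⟨fun hvw => hw (hvw ▸ h.insert_subset_verts hv), fun _ => hv⟩

lemma notMem_edges_contractClaw {f : ℕ} (hf : f ∈ ({f₀, f₁, f₂} : Finset ℕ)) :
    f ∉ (G.contractClaw b w₀ w₁ w₂ w hw).edges := by
  rw [edges_contractClaw h hw, Finset.mem_sdiff, not_and_not_right]
  exact fun _ => hf

lemma whites_eq_insert_contractClaw :
    G.whites = insert w₀ (insert w₁ (insert w₂
      ((G.contractClaw b w₀ w₁ w₂ w hw).whites.erase w))) := by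
  have := h.w₀_mem
  have := h.w₁_mem
  have := h.w₂_mem
  have hwW : w ∉ G.whites := fun hw' => hw (Finset.mem_union_right _ hw')
  ext v
  simp only [contractClaw, Finset.mem_insert, Finset.mem_erase, Finset.mem_sdiff,
    Finset.mem_singleton]
  grind

lemma edges_eq_insert_contractClaw :
    G.edges = insert f₀ (insert f₁ (insert f₂ (G.contractClaw b w₀ w₁ w₂ w hw).edges)) := by
  rw [edges_contractClaw h hw]
  have := h.mem_edges (f := f₀) (by simp)
  have := h.mem_edges (f := f₁) (by simp)
  have := h.mem_edges (f := f₂) (by simp)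
  ext e
  simp only [Finset.mem_insert, Finset.mem_sdiff, Finset.mem_singleton]
  grind

lemma o1At_contractClaw (hgenus : G.WhitesGenusZero)
    (hlabel : ∀ f ∈ ({f₀, f₁, f₂} : Finset ℕ), G.label f = 1) :
    O1At (G.contractClaw b w₀ w₁ w₂ w hw) G w := by
  have hne {v} (hv : v ∈ G.whites) := ne_of_mem_blacks_of_mem_whites h.mem_blacks hv
  refine ⟨Finset.mem_insert_self _ _,
    (G.contractClaw b w₀ w₁ w₂ w hw).edges.filter fun e => G.wEnd e = w₀,
    w₀, w₁, w₂, b, f₀, f₁, f₂, fun e he => ?_, notMem_verts_contractClaw h hw (by simp),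
    notMem_verts_contractClaw h hw (by simp), notMem_verts_contractClaw h hw (by simp),
    notMem_verts_contractClaw h hw (by simp), h.w₀_ne_w₁, h.w₀_ne_w₂, h.w₁_ne_w₂,
    hne h.w₀_mem, hne h.w₁_mem, hne h.w₂_mem, notMem_edges_contractClaw h hw (by simp),
    notMem_edges_contractClaw h hw (by simp), notMem_edges_contractClaw h hw (by simp),
    h.f₀_ne_f₁, h.f₀_ne_f₂, h.f₁_ne_f₂, (Finset.insert_erase h.mem_blacks).symm,
    whites_eq_insert_contractClaw h hw, edges_eq_insert_contractClaw h hw,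
    fun _ _ => ⟨rfl, rfl⟩, fun e he => ?_, h.bEnd_eq (by simp), h.bEnd_eq (by simp),
    h.bEnd_eq (by simp), h.wEnd_f₀, h.wEnd_f₁, h.wEnd_f₂, hlabel _ (by simp),
    hlabel _ (by simp), hlabel _ (by simp),
    fun v hv => (Function.update_of_ne (Finset.ne_of_mem_erase hv) _ _).symm,
    hgenus _ h.w₀_mem, hgenus _ h.w₁_mem, hgenus _ h.w₂_mem⟩
  · obtain ⟨he, hwe⟩ := Finset.mem_filter.1 he
    exact Finset.mem_filter.2 ⟨he, by simp [contractClaw, hwe]⟩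
  · have hwe : G.wEnd e ≠ w := fun hwe =>
      hw (hwe ▸ Finset.mem_union_right _ (G.wEnd_mem e (Finset.mem_filter.1 he).1))
    show G.wEnd e = if (if G.wEnd e = w₀ ∨ G.wEnd e = w₁ then w else G.wEnd e) = w then
      (if e ∈ _ then w₀ else w₁) else if G.wEnd e = w₀ ∨ G.wEnd e = w₁ then w else G.wEnd e
    by_cases h₀ : G.wEnd e = w₀
    · simp [h₀, he]
    by_cases h₁ : G.wEnd e = w₁
    · simp [h₁]
    · simp [h₀, h₁, hwe]

end contractClaw

lemma IsTerminalClaw.isB111 {b w₀ w₁ w₂ f₀ f₁ f₂ : ℕ}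
    (h : G.IsTerminalClaw b w₀ w₁ w₂ f₀ f₁ f₂) (hG : G.IsTrivalentTree)
    (hgenus : G.WhitesGenusZero) (hcard : G.blacks.card = 1) : IsB111 G := by
  have hblacks : G.blacks = {b} := Finset.eq_singleton_iff_unique_mem.2
    ⟨h.mem_blacks, fun x hx => Finset.card_le_one.1 hcard.le x hx b h.mem_blacks⟩
  have hedges : G.edges = {f₀, f₁, f₂} := by
    rw [← h.incidentEdges_eq, incidentEdges_of_mem_blacks h.mem_blacks,
      Finset.filter_true_of_mem fun e he => Finset.mem_singleton.1 (hblacks ▸ G.bEnd_mem e he)]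
  have hwhites : G.whites = {w₀, w₁, w₂} := by
    refine Finset.Subset.antisymm (fun v hv => ?_) ?_
    · obtain ⟨e, he, rfl⟩ := hG.isTree.1.exists_wEnd_eq hG.blacks_nonempty hv
      simp only [hedges, Finset.mem_insert, Finset.mem_singleton] at he
      rcases he with rfl | rfl | rfl <;> simp [h.wEnd_f₀, h.wEnd_f₁, h.wEnd_f₂]
    · simp [Finset.insert_subset_iff, h.w₀_mem, h.w₁_mem, h.w₂_mem]
  have hlabel {f} (hf : f ∈ ({f₀, f₁, f₂} : Finset ℕ)) := hG.label_eq_one f (h.mem_edges hf)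
  exact ⟨b, w₀, w₁, w₂, f₀, f₁, f₂, hblacks, hwhites, h.w₀_ne_w₁, h.w₀_ne_w₂, h.w₁_ne_w₂,
    hedges, h.f₀_ne_f₁, h.f₀_ne_f₂, h.f₁_ne_f₂, h.bEnd_eq (by simp), h.bEnd_eq (by simp),
    h.bEnd_eq (by simp), h.wEnd_f₀, h.wEnd_f₁, h.wEnd_f₂, hlabel (by simp), hlabel (by simp),
    hlabel (by simp), hgenus _ h.w₀_mem, hgenus _ h.w₁_mem, hgenus _ h.w₂_mem⟩

theorem IsTrivalentTree.exists_isB111_reflTransGen_o1Step (hG : G.IsTrivalentTree)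
    (hgenus : G.WhitesGenusZero) : ∃ G₀, IsB111 G₀ ∧ Relation.ReflTransGen O1Step G₀ G := by
  induction hn : G.blacks.card generalizing G with
  | zero => exact absurd hn (Finset.card_pos.2 hG.blacks_nonempty).ne'
  | succ n ih =>
    obtain ⟨b, w₀, w₁, w₂, f₀, f₁, f₂, h⟩ := hG.exists_isTerminalClaw
    rcases n with _ | n
    · exact ⟨G, h.isB111 hG hgenus hn, .refl⟩
    obtain ⟨w, hw⟩ := Infinite.exists_notMem_finset G.Verts
    obtain ⟨G₀, hG₀, hsteps⟩ := ih (hG.contractClaw h hw (by omega)) hgenus.contractClaw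
      ((Finset.card_erase_of_mem h.mem_blacks).trans (by omega))
    exact ⟨G₀, hG₀, hsteps.tail ⟨w, o1At_contractClaw h hw hgenus
      fun f hf => hG.label_eq_one f (h.mem_edges hf)⟩⟩

end Stratifold.LGraph

open Stratifold Stratifold.LGraph

theorem construct_from_b111_general (Γ : LGraph) (hBlack : Γ.blacks.Nonempty)
    (hTri : Γ.Trivalent) (hTree : Γ.IsTree) (hGenus : Γ.WhitesGenusZero)
    (hLab : ∀ e ∈ Γ.edges, Γ.label e = 1) :
    ∃ Γ₀ : LGraph, IsB111 Γ₀ ∧ Relation.ReflTransGen O1Step Γ₀ Γ :=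
  IsTrivalentTree.exists_isB111_reflTransGen_o1Step ⟨hBlack, hTri, hTree, hLab⟩ hGenus

/-- Let `Γ` be a trivalent labeled graph with at least one black vertex which is a tree
with all white vertices of genus `0`, all terminal vertices white, and all edge labels
`1`.  Then `Γ` can be obtained from the `b111`-tree by a finite sequence of
operations `O1`. -/
theorem construct_from_b111 (Γ : LGraph) (hBlack : Γ.blacks.Nonempty)
    (hTri : Γ.Trivalent) (hTree : Γ.IsTree) (hGenus : Γ.WhitesGenusZero)
    (hTerm : Γ.TerminalsWhite) (hLab : ∀ e ∈ Γ.edges, Γ.label e = 1) :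
    ∃ Γ₀ : LGraph, IsB111 Γ₀ ∧ Relation.ReflTransGen O1Step Γ₀ Γ :=
  construct_from_b111_general Γ hBlack hTri hTree hGenus hLab
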